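/- arXiv:1306.6180 — 2 statements merged into one kernel-verified Lean document; each statement's English description precedes it below -/
import Mathlib

section
/- Let g, g' ∈ Sol have nonzero z-coordinates z, z' and suppose p⁺(g) ≠ p⁺(g'), where p⁺(z,x,y) = x/(1 − e^{-z}). Then the group generated by g and g' acts properly on ℝ via the affine action (z,x,y)·ξ = x + e^{-z}ξ, i.e., every orbit of this group is infinite. -/
/-- The group `Sol = ℝ ⋉ ℝ²`, elements written `(z, x, y)`, with multiplication
`(z,x,y)(z',x',y') = (z+z', x+e^{-z}x', y+e^{z}y')`. -/
@[ext] structure Sol where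
  z : ℝ
  x : ℝ
  y : ℝ

namespace Sol

noncomputable instance : Mul Sol :=
  ⟨fun g h => ⟨g.z + h.z, g.x + Real.exp (-g.z) * h.x, g.y + Real.exp g.z * h.y⟩⟩

instance : One Sol := ⟨⟨0, 0, 0⟩⟩

noncomputable instance : Inv Sol :=
  ⟨fun g => ⟨-g.z, -(Real.exp g.z * g.x), -(Real.exp (-g.z) * g.y)⟩⟩

@[simp] lemma mul_def (g h : Sol) :
    g * h = ⟨g.z + h.z, g.x + Real.exp (-g.z) * h.x, g.y + Real.exp g.z * h.y⟩ := rfl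

@[simp] lemma one_def : (1 : Sol) = ⟨0, 0, 0⟩ := rfl

@[simp] lemma inv_def (g : Sol) :
    g⁻¹ = ⟨-g.z, -(Real.exp g.z * g.x), -(Real.exp (-g.z) * g.y)⟩ := rfl

noncomputable instance : Group Sol where
  mul_assoc a b c := by
    ext <;> simp [Real.exp_add, neg_add] <;> ring
  one_mul a := by ext <;> simp
  mul_one a := by ext <;> simp
  inv_mul_cancel a := by
    ext <;> simp [← Real.exp_add]

/-- The affine action of `Sol` on the boundary line `ℝ = ∂⁺Sol`:
`(z,x,y)·ξ = x + e^{-z} ξ`. -/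
noncomputable def act (g : Sol) (ξ : ℝ) : ℝ := g.x + Real.exp (-g.z) * ξ

end Sol

/-- The fixed point `p⁺(g) = x/(1 − e^{-z})` of the affine boundary action of
`g = (z,x,y)` with `z ≠ 0`. -/
noncomputable def pPlus (g : Sol) : ℝ := g.x / (1 - Real.exp (-g.z))

/-! In coordinates centred at `p⁺(g)` the element `g` acts as multiplication by `e^{-z} ≠ 1`,
so `gⁿ` moves every other point along an injective sequence. A point `ξ` of `ℝ` therefore has
an infinite orbit unless it is `p⁺(g)`, and then it is not `p⁺(g')`. -/

namespace Sol

lemma act_mul (g h : Sol) (ξ : ℝ) : act (g * h) ξ = act g (act h ξ) := by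
  simp only [act, mul_def, neg_add, Real.exp_add]
  ring

lemma exp_neg_z_ne_one {g : Sol} (hz : g.z ≠ 0) : Real.exp (-g.z) ≠ 1 := by
  simpa [Real.exp_eq_one_iff] using hz

lemma act_sub_pPlus {g : Sol} (hz : g.z ≠ 0) (ξ : ℝ) :
    act g ξ - pPlus g = Real.exp (-g.z) * (ξ - pPlus g) := by
  have hne : 1 - Real.exp (-g.z) ≠ 0 := sub_ne_zero.mpr (exp_neg_z_ne_one hz).symm
  simp only [act, pPlus]
  field_simp
  ring

lemma act_pow_sub_pPlus {g : Sol} (hz : g.z ≠ 0) (ξ : ℝ) (n : ℕ) :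
    act (g ^ n) ξ - pPlus g = Real.exp (-g.z) ^ n * (ξ - pPlus g) := by
  induction n with
  | zero => simp [act]
  | succ n ih => rw [pow_succ', act_mul, act_sub_pPlus hz, ih, pow_succ']; ring

lemma injective_act_pow {g : Sol} (hz : g.z ≠ 0) {ξ : ℝ} (hξ : ξ ≠ pPlus g) :
    Function.Injective fun n : ℕ => act (g ^ n) ξ := by
  intro m n hmn
  have hpow : Real.exp (-g.z) ^ m = Real.exp (-g.z) ^ n := by
    have := congrArg (· - pPlus g) hmn
    simp only [act_pow_sub_pPlus hz] at this
    exact mul_right_cancel₀ (sub_ne_zero.mpr hξ) this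
  exact pow_right_injective₀ (Real.exp_pos _) (exp_neg_z_ne_one hz) hpow

lemma infinite_range_act_of_mem {G : Subgroup Sol} {g : Sol} (hg : g ∈ G) (hz : g.z ≠ 0)
    {ξ : ℝ} (hξ : ξ ≠ pPlus g) : (Set.range fun h : G => act h.1 ξ).Infinite :=
  Set.infinite_of_injective_forall_mem (injective_act_pow hz hξ)
    fun n => ⟨⟨g ^ n, pow_mem hg n⟩, rfl⟩

end Sol

/-- If `g, g' ∈ Sol` have nonzero `z`-coordinates and `p⁺(g) ≠ p⁺(g')`, then the
group generated by `g` and `g'` acts properly on `ℝ`: every orbit is infinite. -/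
theorem proper_action_of_two_elements (g g' : Sol) (hz : g.z ≠ 0) (hz' : g'.z ≠ 0)
    (hpp : pPlus g ≠ pPlus g') :
    ∀ ξ : ℝ,
      (Set.range fun h : Subgroup.closure {g, g'} => Sol.act h.1 ξ).Infinite := by
  intro ξ
  by_cases hξ : ξ = pPlus g
  · exact Sol.infinite_range_act_of_mem (Subgroup.subset_closure (by simp)) hz' (hξ ▸ hpp)
  · exact Sol.infinite_range_act_of_mem (Subgroup.subset_closure (by simp)) hz hξ
end

section
/- Let q_0 > 1/2 and q_1 = (1−q_0)/2 ≥ 0. Let 0 < β < 1 with 1/β a Pisot number. Then for t_l = 2πβ^l (l ∈ ℤ), the doubly infinite product Π_{k∈ℤ} (2q_1 cos(2π β^k) + q_0) converges to a strictly positive number c, and c does not depend on l when evaluated as Π_{k∈ℤ}(2q_1 cos(t_l β^k) + q_0). -/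
open Filter Finset

set_option maxHeartbeats 1000000

/-- A real number `α` is a Pisot number if `α > 1` and `α` is a root of a monic
integer polynomial all of whose other complex roots have absolute value `< 1`. -/
def IsPisot (α : ℝ) : Prop :=
  1 < α ∧ ∃ P : Polynomial ℤ, P.Monic ∧ 0 < P.natDegree ∧
    Polynomial.aeval (α : ℂ) P = 0 ∧
    ∀ w : ℂ, Polynomial.aeval w P = 0 → w ≠ (α : ℂ) → ‖w‖ < 1

open Polynomial IntermediateField

lemma finset_bound_lt_one {ι : Type*} (s : Finset ι) (f : ι → ℝ)
    (h0 : ∀ i, 0 ≤ f i) (h : ∀ i ∈ s, f i < 1) :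
    ∃ θ : ℝ, 0 ≤ θ ∧ θ < 1 ∧ ∀ i ∈ s, f i ≤ θ := by
  classical
  induction s using Finset.induction_on with
  | empty => exact ⟨0, le_refl _, by norm_num, by simp⟩
  | @insert a s ha ih =>
    obtain ⟨θ, hθ0, hθ1, hθb⟩ := ih (fun i hi => h i (Finset.mem_insert_of_mem hi))
    refine ⟨max θ (f a), le_trans hθ0 (le_max_left _ _),
      max_lt hθ1 (h a (Finset.mem_insert_self a s)), fun i hi => ?_⟩
    rcases Finset.mem_insert.mp hi with rfl | hi
    · exact le_max_right _ _
    · exact le_trans (hθb i hi) (le_max_left _ _)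

lemma pisot_dist (α : ℝ) (h : IsPisot α) :
    ∃ θ : ℝ, 0 ≤ θ ∧ θ < 1 ∧ ∃ C : ℝ, 0 < C ∧
      ∀ n : ℕ, ∃ m : ℤ, |α ^ n - m| ≤ C * θ ^ n := by
  classical
  obtain ⟨hα, P, hmonic, hdeg, hrootC, hothers⟩ := h
  have hrootR : Polynomial.aeval α P = 0 := by
    have := Polynomial.aeval_algebraMap_apply ℂ α P
    rw [show (algebraMap ℝ ℂ) α = (α : ℂ) from rfl, hrootC] at this
    exact_mod_cast (Complex.ofReal_eq_zero.mp this.symm)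
  have hint : IsIntegral ℤ α := ⟨P, hmonic, by simpa [Polynomial.aeval_def] using hrootR⟩
  have hintQ : IsIntegral ℚ α := hint.tower_top
  haveI : FiniteDimensional ℚ ℚ⟮α⟯ := IntermediateField.adjoin.finiteDimensional hintQ
  set g : ℚ⟮α⟯ := IntermediateField.AdjoinSimple.gen ℚ α with hg
  have hgen : algebraMap ℚ⟮α⟯ ℝ g = α := IntermediateField.AdjoinSimple.algebraMap_gen ℚ α
  have hintg : IsIntegral ℤ g := by
    rwa [← isIntegral_algebraMap_iff (algebraMap ℚ⟮α⟯ ℝ).injective, hgen]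
  -- the real embedding
  set σ₀ : ℚ⟮α⟯ →ₐ[ℚ] ℂ := (Complex.ofRealAm.restrictScalars ℚ).comp (IntermediateField.val ℚ⟮α⟯) with hσ₀
  have hσ₀g : σ₀ g = (α : ℂ) := by
    simp [hσ₀, ← hgen]
    rfl
  -- every embedding sends g to a root of P
  have hroot : ∀ σ : ℚ⟮α⟯ →ₐ[ℚ] ℂ, Polynomial.aeval (σ g) P = 0 := by
    intro σ
    have h1 : Polynomial.aeval (σ g) (minpoly ℚ α) = 0 := by
      rw [← IntermediateField.minpoly_gen ℚ α, Polynomial.aeval_algHom_apply,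
        ← hg]
      exact (congrArg σ (minpoly.aeval ℚ g)).trans (map_zero σ)
    have h2 : minpoly ℚ α = (minpoly ℤ α).map (algebraMap ℤ ℚ) :=
      minpoly.isIntegrallyClosed_eq_field_fractions ℚ ℝ hint
    rw [h2, Polynomial.aeval_map_algebraMap] at h1
    obtain ⟨R, hR⟩ := minpoly.isIntegrallyClosed_dvd hint hrootR
    rw [hR, map_mul, h1, zero_mul]
  have hS : ∀ σ : ℚ⟮α⟯ →ₐ[ℚ] ℂ, σ ≠ σ₀ → ‖σ g‖ < 1 := by
    intro σ hσ
    refine hothers (σ g) (hroot σ) ?_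
    intro hEq
    apply hσ
    apply PowerBasis.algHom_ext (IntermediateField.adjoin.powerBasis hintQ)
    rw [IntermediateField.adjoin.powerBasis_gen]
    exact hEq.trans hσ₀g.symm
  set S : Finset (ℚ⟮α⟯ →ₐ[ℚ] ℂ) := Finset.univ.erase σ₀ with hSdef
  obtain ⟨θ, hθ0, hθ1, hθb⟩ : ∃ θ : ℝ, 0 ≤ θ ∧ θ < 1 ∧ ∀ σ ∈ S, ‖σ g‖ ≤ θ :=
    finset_bound_lt_one S (fun σ => ‖σ g‖) (fun σ => norm_nonneg _)
      (fun σ hσ => hS σ (Finset.ne_of_mem_erase hσ))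
  refine ⟨θ, hθ0, hθ1, (S.card : ℝ) + 1, add_pos_of_nonneg_of_pos (Nat.cast_nonneg _) one_pos, fun n => ?_⟩
  have hintgn : IsIntegral ℤ (g ^ n) := hintg.pow n
  have htr : IsIntegral ℤ (Algebra.trace ℚ ℚ⟮α⟯ (g ^ n)) := Algebra.isIntegral_trace hintgn
  obtain ⟨m, hm⟩ := IsIntegrallyClosed.isIntegral_iff.mp htr
  refine ⟨m, ?_⟩
  have hEmb : algebraMap ℚ ℂ (Algebra.trace ℚ ℚ⟮α⟯ (g ^ n)) = ∑ σ : ℚ⟮α⟯ →ₐ[ℚ] ℂ, σ (g ^ n) :=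
    trace_eq_sum_embeddings ℂ
  have hsplit : (∑ σ : ℚ⟮α⟯ →ₐ[ℚ] ℂ, σ (g ^ n)) = (α : ℂ) ^ n + ∑ σ ∈ S, (σ g) ^ n := by
    rw [← Finset.add_sum_erase _ _ (Finset.mem_univ σ₀)]
    simp [hσ₀g, map_pow, hSdef]
  have hmC : (m : ℂ) = (α : ℂ) ^ n + ∑ σ ∈ S, (σ g) ^ n := by
    rw [← hsplit, ← hEmb, ← hm]
    simp [eq_intCast, map_intCast]
  have habs : |α ^ n - (m : ℝ)| = ‖∑ σ ∈ S, (σ g) ^ n‖ := by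
    rw [← Real.norm_eq_abs, ← Complex.norm_real, show ((α ^ n - (m : ℝ) : ℝ) : ℂ) = -(∑ σ ∈ S, (σ g) ^ n) by
      push_cast [hmC]; ring, norm_neg]
  rw [habs]
  calc ‖∑ σ ∈ S, (σ g) ^ n‖ ≤ ∑ σ ∈ S, ‖(σ g) ^ n‖ :=
        norm_sum_le _ _
    _ ≤ ∑ _σ ∈ S, θ ^ n := by
        refine Finset.sum_le_sum fun σ hσ => ?_
        rw [norm_pow]
        exact pow_le_pow_left₀ (norm_nonneg _) (hθb σ hσ) n
    _ = (S.card : ℝ) * θ ^ n := by rw [Finset.sum_const, nsmul_eq_mul]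
    _ ≤ ((S.card : ℝ) + 1) * θ ^ n := by
        have : (0:ℝ) ≤ θ ^ n := pow_nonneg hθ0 n
        nlinarith

/-- Let `q₀ > 1/2`, `q₁ = (1−q₀)/2`, and `0 < β < 1` with `1/β` a Pisot number.
For `t_l = 2πβ^l`, the doubly infinite product `Π_{k∈ℤ} (2q₁ cos(t_l β^k) + q₀)`
converges to a strictly positive number `c` independent of `l`. -/
theorem doubly_infinite_product_positive (q₀ q₁ : ℝ) (hq₀ : 1 / 2 < q₀)
    (hq₁ : q₁ = (1 - q₀) / 2) (hq₁' : 0 ≤ q₁)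
    (β : ℝ) (hβ0 : 0 < β) (hβ1 : β < 1) (hpisot : IsPisot (1 / β)) :
    ∃ c : ℝ, 0 < c ∧ ∀ l : ℤ,
      Tendsto (fun n : ℕ =>
          ∏ k ∈ Finset.Icc (-(n : ℤ)) (n : ℤ),
            (2 * q₁ * Real.cos (2 * Real.pi * β ^ l * β ^ k) + q₀))
        atTop (nhds c) := by
  obtain ⟨θ, hθ0, hθ1, C, hC, hdist⟩ := pisot_dist (1/β) hpisot
  set f : ℤ → ℝ := fun m => 2 * q₁ * Real.cos (2 * Real.pi * β ^ m) + q₀ with hfdef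
  have hβne : β ≠ 0 := ne_of_gt hβ0
  have hq01 : q₀ + 2 * q₁ = 1 := by rw [hq₁]; ring
  have hδ : (0:ℝ) < 2 * q₀ - 1 := by linarith
  have hfl : ∀ m, 2 * q₀ - 1 ≤ f m := fun m => by
    have h1 : -1 ≤ Real.cos (2 * Real.pi * β ^ m) := Real.neg_one_le_cos _
    simp only [hfdef]; nlinarith
  have hfu : ∀ m, f m ≤ 1 := fun m => by
    have h1 : Real.cos (2 * Real.pi * β ^ m) ≤ 1 := Real.cos_le_one _
    simp only [hfdef]; nlinarith
  have hf0 : ∀ m, 0 < f m := fun m => lt_of_lt_of_le hδ (hfl m)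
  set ρ : ℝ := max β θ with hρdef
  have hρ0 : (0:ℝ) ≤ ρ := le_trans hβ0.le (le_max_left _ _)
  have hρ1 : ρ < 1 := max_lt hβ1 hθ1
  set D : ℝ := 2 * Real.pi ^ 2 * (1 + C ^ 2) with hDdef
  have hπ : (0:ℝ) < Real.pi := Real.pi_pos
  have hD0 : 0 < D := by positivity
  -- key cosine bound
  have hcosb : ∀ m : ℤ, 1 - Real.cos (2 * Real.pi * β ^ m) ≤ D * ρ ^ m.natAbs := by
    intro m
    rcases Int.natAbs_eq m with hm | hm
    · -- m = natAbs
      set n := m.natAbs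
      have hbm : β ^ m = β ^ n := by rw [hm, zpow_natCast]
      have hx0 : 0 ≤ 2 * Real.pi * β ^ n := by positivity
      have h1 : 1 - (2 * Real.pi * β ^ n) ^ 2 / 2 ≤ Real.cos (2 * Real.pi * β ^ n) :=
        Real.one_sub_sq_div_two_le_cos
      have hβn1 : β ^ n ≤ 1 := pow_le_one₀ hβ0.le hβ1.le
      have hβn0 : 0 ≤ β ^ n := pow_nonneg hβ0.le n
      have hβρ : β ^ n ≤ ρ ^ n := pow_le_pow_left₀ hβ0.le (le_max_left _ _) n
      rw [hbm]
      have hsq : (2 * Real.pi * β ^ n) ^ 2 / 2 = 2 * Real.pi ^ 2 * (β ^ n) ^ 2 := by ring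
      have key : (β ^ n) ^ 2 ≤ ρ ^ n := le_trans (by nlinarith) hβρ
      calc 1 - Real.cos (2 * Real.pi * β ^ n) ≤ 2 * Real.pi ^ 2 * (β ^ n) ^ 2 := by
            linarith [h1, hsq]
        _ ≤ 2 * Real.pi ^ 2 * ρ ^ n :=
            mul_le_mul_of_nonneg_left key (by positivity)
        _ ≤ D * ρ ^ n :=
            mul_le_mul_of_nonneg_right (by nlinarith [sq_nonneg C]) (pow_nonneg hρ0 n)
    · -- m = -natAbs : Pisot case
      set n := m.natAbs
      have hbm : β ^ m = (1/β) ^ n := by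
        rw [hm, zpow_neg, zpow_natCast, one_div, inv_pow]
      obtain ⟨j, hj⟩ := hdist n
      have hper : Real.cos (2 * Real.pi * β ^ m) =
          Real.cos (2 * Real.pi * ((1/β) ^ n - j)) := by
        rw [hbm, show 2 * Real.pi * (1/β) ^ n
            = 2 * Real.pi * ((1/β) ^ n - j) + j * (2 * Real.pi) by ring,
          Real.cos_add_int_mul_two_pi]
      rw [hper]
      have h1 : 1 - (2 * Real.pi * ((1/β) ^ n - j)) ^ 2 / 2 ≤
          Real.cos (2 * Real.pi * ((1/β) ^ n - j)) := Real.one_sub_sq_div_two_le_cos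
      have habs : ((1/β) ^ n - j) ^ 2 ≤ (C * θ ^ n) ^ 2 := by
        rw [← sq_abs]
        exact pow_le_pow_left₀ (abs_nonneg _) hj 2
      have hθn1 : θ ^ n ≤ 1 := pow_le_one₀ hθ0 hθ1.le
      have hθn0 : 0 ≤ θ ^ n := pow_nonneg hθ0 n
      have hθρ : θ ^ n ≤ ρ ^ n := pow_le_pow_left₀ hθ0 (le_max_right _ _) n
      have hsq : (2 * Real.pi * ((1/β) ^ n - j)) ^ 2 / 2
          = 2 * Real.pi ^ 2 * ((1/β) ^ n - j) ^ 2 := by ring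
      have key : (C * θ ^ n) ^ 2 ≤ C ^ 2 * ρ ^ n := by
        have h7 : (θ ^ n) ^ 2 ≤ ρ ^ n := le_trans (by nlinarith) hθρ
        calc (C * θ ^ n) ^ 2 = C ^ 2 * (θ ^ n) ^ 2 := by ring
          _ ≤ C ^ 2 * ρ ^ n := mul_le_mul_of_nonneg_left h7 (sq_nonneg C)
      calc 1 - Real.cos (2 * Real.pi * ((1/β) ^ n - j))
          ≤ 2 * Real.pi ^ 2 * ((1/β) ^ n - j) ^ 2 := by linarith [h1, hsq]
        _ ≤ 2 * Real.pi ^ 2 * (C ^ 2 * ρ ^ n) := by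
            refine mul_le_mul_of_nonneg_left (le_trans habs key) (by positivity)
        _ ≤ D * ρ ^ n := by nlinarith [pow_nonneg hρ0 n, sq_nonneg C]
  -- log bound
  set K : ℝ := 2 * q₁ * D / (2 * q₀ - 1) with hKdef
  have hgb : ∀ m : ℤ, |Real.log (f m)| ≤ K * ρ ^ m.natAbs := by
    intro m
    have hfm := hf0 m
    rw [abs_of_nonpos (Real.log_nonpos hfm.le (hfu m)), ← Real.log_inv]
    have h3 : Real.log (f m)⁻¹ ≤ (f m)⁻¹ - 1 := Real.log_le_sub_one_of_pos (inv_pos.mpr hfm)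
    have hinv : (f m)⁻¹ - 1 = (1 - f m) / f m := by field_simp
    have h4 : (1 - f m) / f m ≤ (1 - f m) / (2 * q₀ - 1) :=
      div_le_div_of_nonneg_left (by linarith [hfu m]) hδ (hfl m)
    have h5 : 1 - f m ≤ 2 * q₁ * (D * ρ ^ m.natAbs) := by
      have := hcosb m
      simp only [hfdef]
      nlinarith
    have h6 : (1 - f m) / (2 * q₀ - 1) ≤ K * ρ ^ m.natAbs := by
      rw [div_le_iff₀ hδ]
      have he : K * ρ ^ m.natAbs * (2 * q₀ - 1) = 2 * q₁ * (D * ρ ^ m.natAbs) := by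
        rw [hKdef]; field_simp
      rw [he]; exact h5
    calc Real.log (f m)⁻¹ ≤ (f m)⁻¹ - 1 := h3
      _ = (1 - f m) / f m := hinv
      _ ≤ (1 - f m) / (2 * q₀ - 1) := h4
      _ ≤ K * ρ ^ m.natAbs := h6
  have hgeo : Summable (fun n : ℕ => K * ρ ^ n) :=
    (summable_geometric_of_lt_one hρ0 hρ1).mul_left K
  have hsum : Summable (fun m : ℤ => Real.log (f m)) := by
    apply Summable.of_nat_of_neg
    · exact Summable.of_abs (Summable.of_nonneg_of_le (fun n => abs_nonneg _)
        (fun n => by simpa using hgb (n : ℤ)) hgeo)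
    · exact Summable.of_abs (Summable.of_nonneg_of_le (fun n => abs_nonneg _)
        (fun n => by simpa using hgb (-(n : ℤ))) hgeo)
  set c : ℝ := Real.exp (∑' m : ℤ, Real.log (f m)) with hcdef
  have hprod : HasProd f c := by
    have hs : HasSum (fun m : ℤ => Real.log (f m)) (∑' m : ℤ, Real.log (f m)) := hsum.hasSum
    have ht : Tendsto (fun s : Finset ℤ => Real.exp (∑ m ∈ s, Real.log (f m)))
        atTop (nhds c) := (Real.continuous_exp.continuousAt.tendsto).comp hs
    refine ht.congr fun s => ?_
    rw [Real.exp_sum]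
    exact Finset.prod_congr rfl fun m _ => Real.exp_log (hf0 m)
  refine ⟨c, Real.exp_pos _, fun l => ?_⟩
  have hT : Tendsto (fun n : ℕ => Finset.Icc (l + -(n:ℤ)) (l + (n:ℤ))) atTop atTop := by
    apply tendsto_atTop_finset_of_monotone
    · intro a b hab
      refine Finset.Icc_subset_Icc ?_ ?_ <;> omega
    · intro x
      exact ⟨(x - l).natAbs, Finset.mem_Icc.mpr ⟨by omega, by omega⟩⟩
  have hcomp := hprod.comp hT
  refine hcomp.congr fun n => ?_
  show ∏ m ∈ Finset.Icc (l + -(n:ℤ)) (l + (n:ℤ)), f m = _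
  rw [← Finset.map_add_left_Icc, Finset.prod_map]
  refine Finset.prod_congr rfl fun k _ => ?_
  simp only [addLeftEmbedding_apply, hfdef]
  rw [zpow_add₀ hβne, ← mul_assoc]
end
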